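/- Write α = (β_s, β_t) ∈ Θ := Δ_K × Δ_K, and suppose the SLOTAlign objective F(π, α) satisfies: α ↦ F(π, α) has L_f^α-Lipschitz gradient for every π ∈ C, and π ↦ F(π, α) has L_f^π-Lipschitz gradient (Frobenius norm) for every α ∈ Θ. Let 0 < τ < 1/L_f^α and 0 < η < 1/L_f^π, let (π^k, α^k) ∈ C × Θ with π^k entrywise positive, let α^{k+1} minimize α ↦ ⟨∇_α F(π^k, α^k), α⟩ + (1/(2τ))‖α − α^k‖² over Θ, and let π^{k+1} minimize π ↦ ⟨∇_π F(π^k, α^{k+1}), π⟩ + (1/η)·KL(π‖π^k) over C. Then F(π^{k+1}, α^{k+1}) − F(π^k, α^k) ≤ −κ₁·(‖π^{k+1} − π^k‖_F² + ‖α^{k+1} − α^k‖²), where κ₁ = min(1/(2τ) − L_f^α/2, 1/(2η) − L_f^π/2) > 0. -/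

import Mathlib

/-!
Each block update is a sufficient-decrease step. By the descent lemma, an `L`-Lipschitz gradient
bounds the change of `F` along one block by the linear term `⟪∇F, Δ⟫` plus `L/2 ‖Δ‖²`.
Comparing the minimiser of the block subproblem with the previous iterate bounds that linear
term by `-(1/(2τ)) ‖Δα‖²` for the weight step and by `-(1/η) KL(π^{k+1} ‖ π^k)` for the coupling
step. Entries of a coupling lie in `[0, 1]`, where `x log (x/y) - x + y ≥ (x - y)²/2`, so the KL
term is at least `½ ‖Δπ‖²`. Adding the two block decreases gives the claim.
-/

open scoped RealInnerProductSpace BigOperators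

/-- The Kullback–Leibler divergence between two couplings (viewed as elements of the
Euclidean space of `n×m` arrays), `KL(P‖Q) = Σ_p (P_p log(P_p/Q_p) − P_p + Q_p)`
(with the convention `0·log 0 = 0`, automatic since `Real.log 0 = 0`). -/
noncomputable def vecKL {ι : Type*} [Fintype ι] (P Q : ι → ℝ) : ℝ :=
  ∑ p, (P p * Real.log (P p / Q p) - P p + Q p)

/-- The set `Θ = Δ_K × Δ_K` of concatenated weight vectors `α = (β_s, β_t)`:
all entries are nonnegative and each block sums to `1`. -/
def weightSet (K : ℕ) : Set (EuclideanSpace ℝ (Fin K ⊕ Fin K)) :=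
  {α | (∀ p, 0 ≤ α p) ∧ (∑ q, α (Sum.inl q) = 1) ∧ (∑ q, α (Sum.inr q) = 1)}

/-- The transport polytope with uniform marginals, viewed inside the Euclidean space
of `n×m` arrays (Frobenius norm). -/
def transportSet (n m : ℕ) : Set (EuclideanSpace ℝ (Fin n × Fin m)) :=
  {π | (∀ p, 0 ≤ π p) ∧ (∀ i, ∑ k, π (i, k) = 1 / (n : ℝ)) ∧
    (∀ k, ∑ i, π (i, k) = 1 / (m : ℝ))}

/-- The SLOTAlign objective `F(π, α)` with `α = (β_s, β_t)`:
`F = (1/n²) Σᵢⱼ (Σ_q βs_q Ds_q(i,j))² + (1/m²) Σₖₗ (Σ_q βt_q Dt_q(k,l))²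
  − 2 tr((Σ_q βs_q Ds_q) π (Σ_q βt_q Dt_q) πᵀ)`,
the trace written out as
`Σᵢⱼₖₗ (Σ_q βs_q Ds_q(i,j)) π(j,k) (Σ_q βt_q Dt_q(k,l)) π(i,l)`. -/
noncomputable def slotFE {n m K : ℕ} (Ds : Fin K → Matrix (Fin n) (Fin n) ℝ)
    (Dt : Fin K → Matrix (Fin m) (Fin m) ℝ)
    (π : EuclideanSpace ℝ (Fin n × Fin m))
    (α : EuclideanSpace ℝ (Fin K ⊕ Fin K)) : ℝ :=
  (1 / (n : ℝ) ^ 2) * ∑ i, ∑ j, (∑ q, α (Sum.inl q) * Ds q i j) ^ 2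
  + (1 / (m : ℝ) ^ 2) * ∑ k, ∑ l, (∑ q, α (Sum.inr q) * Dt q k l) ^ 2
  - 2 * ∑ i, ∑ j, ∑ k, ∑ l,
      (∑ q, α (Sum.inl q) * Ds q i j) * π (j, k)
        * (∑ q, α (Sum.inr q) * Dt q k l) * π (i, l)


open Set

lemma sq_sub_div_two_le_mul_log_div_sub_add {a b : ℝ} (ha : 0 ≤ a) (ha1 : a ≤ 1)
    (hb : 0 < b) (hb1 : b ≤ 1) : (a - b) ^ 2 / 2 ≤ a * Real.log (a / b) - a + b := by
  rcases ha.eq_or_lt with rfl | ha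
  · nlinarith
  set g : ℝ → ℝ := fun x => x * Real.log (x / b) - x + b - (x - b) ^ 2 / 2
  have hg : ∀ x, 0 < x → HasDerivAt g (Real.log (x / b) - (x - b)) x := by
    intro x hx
    have := ((hasDerivAt_id x).mul (((hasDerivAt_id x).div_const b).log
      (div_pos hx hb).ne')).sub (hasDerivAt_id x) |>.add_const b |>.sub
      ((((hasDerivAt_id x).sub_const b).pow 2).div_const 2)
    refine this.congr_deriv ?_
    simp only [id]
    field_simp
    ring
  have hdiff : ∀ x, 0 < x → DifferentiableAt ℝ g x := fun x hx => (hg x hx).differentiableAt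
  have hmin : IsMinOn g (Ioc 0 1) b := by
    refine isMinOn_Ioc_of_deriv (hdiff b hb).continuousAt (hdiff 1 one_pos).continuousAt
      (fun x hx => (hdiff x hx.1).differentiableWithinAt)
      (fun x hx => (hdiff x (hb.trans hx.1)).differentiableWithinAt) ?_ ?_
    · rintro x ⟨hx, hxb⟩
      rw [(hg x hx).deriv, sub_nonpos]
      calc Real.log (x / b) ≤ x / b - 1 := Real.log_le_sub_one_of_pos (div_pos hx hb)
        _ ≤ x - b := by rw [div_sub_one hb.ne', div_le_iff₀ hb]; nlinarith
    · rintro x ⟨hbx, hx1⟩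
      have hx : 0 < x := hb.trans hbx
      rw [(hg x hx).deriv, sub_nonneg]
      calc x - b ≤ 1 - (x / b)⁻¹ := by rw [inv_div, one_sub_div hx.ne', le_div_iff₀ hx]; nlinarith
        _ ≤ Real.log (x / b) := Real.one_sub_inv_le_log_of_pos (div_pos hx hb)
  have hgba : g b ≤ g a := hmin ⟨ha, ha1⟩
  simp only [g, div_self hb.ne', Real.log_one] at hgba
  linarith

@[simp]
lemma vecKL_self {ι : Type*} [Fintype ι] (P : ι → ℝ) : vecKL P P = 0 := by
  refine Finset.sum_eq_zero fun p _ => ?_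
  by_cases h : P p = 0 <;> simp [h]

lemma half_mul_norm_sub_sq_le_vecKL {ι : Type*} [Fintype ι] {P Q : EuclideanSpace ℝ ι}
    (hP : ∀ p, P p ∈ Icc 0 1) (hQ : ∀ p, Q p ∈ Ioc 0 1) :
    1 / 2 * ‖P - Q‖ ^ 2 ≤ vecKL P Q := by
  rw [EuclideanSpace.real_norm_sq_eq, Finset.mul_sum]
  refine Finset.sum_le_sum fun p _ => ?_
  have := sq_sub_div_two_le_mul_log_div_sub_add (hP p).1 (hP p).2 (hQ p).1 (hQ p).2
  simp only [PiLp.sub_apply]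
  linarith

lemma le_one_of_mem_transportSet {n m : ℕ} {π : EuclideanSpace ℝ (Fin n × Fin m)}
    (hπ : π ∈ transportSet n m) (p : Fin n × Fin m) : π p ≤ 1 :=
  calc π p ≤ ∑ k, π (p.1, k) :=
        Finset.single_le_sum (f := fun k => π (p.1, k)) (fun k _ => hπ.1 _) (Finset.mem_univ p.2)
    _ = 1 / n := hπ.2.1 p.1
    _ ≤ 1 := div_le_one_of_le₀ (by exact_mod_cast p.1.pos) (Nat.cast_nonneg n)

section Descent

variable {E : Type*} [NormedAddCommGroup E] [InnerProductSpace ℝ E] [CompleteSpace E]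
  {f : E → ℝ}

lemma hasDerivAt_comp_add_smul {x d : E} {t : ℝ} (hf : DifferentiableAt ℝ f (x + t • d)) :
    HasDerivAt (fun s : ℝ => f (x + s • d)) ⟪gradient f (x + t • d), d⟫ t := by
  have hline : HasDerivAt (fun s : ℝ => x + s • d) d t := by
    simpa using ((hasDerivAt_id t).smul_const d).const_add x
  simpa [Function.comp_def] using
    (hasGradientAt_iff_hasFDerivAt.1 hf.hasGradientAt).comp_hasDerivAt t hline

lemma le_add_inner_gradient_add_half_mul_sq (hf : Differentiable ℝ f) {L : ℝ}
    (hL : ∀ a b, ‖gradient f a - gradient f b‖ ≤ L * ‖a - b‖) (x y : E) :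
    f y ≤ f x + ⟪gradient f x, y - x⟫ + L / 2 * ‖y - x‖ ^ 2 := by
  set d := y - x
  let φ : ℝ → ℝ := fun t => f (x + t • d) - t * ⟪gradient f x, d⟫ - L / 2 * t ^ 2 * ‖d‖ ^ 2
  have hφ : ∀ t, HasDerivAt φ
      (⟪gradient f (x + t • d) - gradient f x, d⟫ - L * t * ‖d‖ ^ 2) t := by
    intro t
    refine (((hasDerivAt_comp_add_smul (hf _)).sub ((hasDerivAt_id t).mul_const _)).sub
      ((((hasDerivAt_id t).pow 2).const_mul (L / 2)).mul_const _)).congr_deriv ?_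
    simp only [id, inner_sub_left]
    ring
  have hφ' : ∀ t ∈ Ioo (0 : ℝ) 1,
      ⟪gradient f (x + t • d) - gradient f x, d⟫ - L * t * ‖d‖ ^ 2 ≤ 0 := by
    rintro t ⟨ht, -⟩
    rw [sub_nonpos]
    have hlip : ‖gradient f (x + t • d) - gradient f x‖ ≤ L * (t * ‖d‖) := by
      simpa [norm_smul, abs_of_pos ht] using hL (x + t • d) x
    calc ⟪gradient f (x + t • d) - gradient f x, d⟫
        ≤ ‖gradient f (x + t • d) - gradient f x‖ * ‖d‖ := real_inner_le_norm _ _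
      _ ≤ L * (t * ‖d‖) * ‖d‖ := by gcongr
      _ = L * t * ‖d‖ ^ 2 := by ring
  have hanti : AntitoneOn φ (Icc 0 1) :=
    antitoneOn_of_hasDerivWithinAt_nonpos (convex_Icc 0 1)
      (fun t _ => (hφ t).continuousAt.continuousWithinAt)
      (fun t _ => (hφ t).hasDerivWithinAt) (by simpa only [interior_Icc] using hφ')
  have h01 : φ 1 ≤ φ 0 := hanti (by simp) (by simp) zero_le_one
  simp only [φ, one_smul, zero_smul, add_zero, d, add_sub_cancel] at h01
  linarith

lemma le_sub_of_inner_gradient_add_le (hf : Differentiable ℝ f) {L c : ℝ}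
    (hL : ∀ a b, ‖gradient f a - gradient f b‖ ≤ L * ‖a - b‖) {x y : E}
    (hstep : ⟪gradient f x, y - x⟫ + c * ‖y - x‖ ^ 2 ≤ 0) :
    f y ≤ f x - (c - L / 2) * ‖y - x‖ ^ 2 := by
  linarith [le_add_inner_gradient_add_half_mul_sq hf hL x y]

end Descent

lemma differentiable_slotFE_weights {n m K : ℕ} (Ds : Fin K → Matrix (Fin n) (Fin n) ℝ)
    (Dt : Fin K → Matrix (Fin m) (Fin m) ℝ) (π : EuclideanSpace ℝ (Fin n × Fin m)) :
    Differentiable ℝ (fun x : EuclideanSpace ℝ (Fin K ⊕ Fin K) => slotFE Ds Dt π x) := by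
  unfold slotFE
  fun_prop

lemma differentiable_slotFE_coupling {n m K : ℕ} (Ds : Fin K → Matrix (Fin n) (Fin n) ℝ)
    (Dt : Fin K → Matrix (Fin m) (Fin m) ℝ) (α : EuclideanSpace ℝ (Fin K ⊕ Fin K)) :
    Differentiable ℝ (fun x : EuclideanSpace ℝ (Fin n × Fin m) => slotFE Ds Dt x α) := by
  unfold slotFE
  fun_prop

theorem slotalign_sufficient_decrease_general (n m K : ℕ)
    (Ds : Fin K → Matrix (Fin n) (Fin n) ℝ)
    (Dt : Fin K → Matrix (Fin m) (Fin m) ℝ)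
    (Lα Lπ τ η : ℝ)
    (hLα : ∀ π ∈ transportSet n m, ∀ a b : EuclideanSpace ℝ (Fin K ⊕ Fin K),
      ‖gradient (fun x => slotFE Ds Dt π x) a - gradient (fun x => slotFE Ds Dt π x) b‖
        ≤ Lα * ‖a - b‖)
    (hLπ : ∀ α ∈ weightSet K, ∀ p q : EuclideanSpace ℝ (Fin n × Fin m),
      ‖gradient (fun x => slotFE Ds Dt x α) p - gradient (fun x => slotFE Ds Dt x α) q‖
        ≤ Lπ * ‖p - q‖)
    (hη : 0 < η)
    (πk πk1 : EuclideanSpace ℝ (Fin n × Fin m))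
    (αk αk1 : EuclideanSpace ℝ (Fin K ⊕ Fin K))
    (hπk : πk ∈ transportSet n m) (hπkpos : ∀ p, 0 < πk p)
    (hπk1 : πk1 ∈ transportSet n m)
    (hαk : αk ∈ weightSet K) (hαk1 : αk1 ∈ weightSet K)
    (hαmin : ∀ a ∈ weightSet K,
      ⟪gradient (fun x => slotFE Ds Dt πk x) αk, αk1⟫ + 1 / (2 * τ) * ‖αk1 - αk‖ ^ 2
        ≤ ⟪gradient (fun x => slotFE Ds Dt πk x) αk, a⟫ + 1 / (2 * τ) * ‖a - αk‖ ^ 2)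
    (hπmin : ∀ p ∈ transportSet n m,
      ⟪gradient (fun x => slotFE Ds Dt x αk1) πk, πk1⟫ + (1 / η) * vecKL πk1 πk
        ≤ ⟪gradient (fun x => slotFE Ds Dt x αk1) πk, p⟫ + (1 / η) * vecKL p πk) :
    slotFE Ds Dt πk1 αk1 - slotFE Ds Dt πk αk
      ≤ -(min (1 / (2 * τ) - Lα / 2) (1 / (2 * η) - Lπ / 2))
          * (‖πk1 - πk‖ ^ 2 + ‖αk1 - αk‖ ^ 2) := by
  have hα : slotFE Ds Dt πk αk1
      ≤ slotFE Ds Dt πk αk - (1 / (2 * τ) - Lα / 2) * ‖αk1 - αk‖ ^ 2 := by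
    refine le_sub_of_inner_gradient_add_le (differentiable_slotFE_weights Ds Dt πk)
      (hLα πk hπk) ?_
    have hcmp := hαmin αk hαk
    rw [sub_self, norm_zero] at hcmp
    rw [inner_sub_right]
    linarith
  have hπ : slotFE Ds Dt πk1 αk1
      ≤ slotFE Ds Dt πk αk1 - (1 / (2 * η) - Lπ / 2) * ‖πk1 - πk‖ ^ 2 := by
    refine le_sub_of_inner_gradient_add_le (differentiable_slotFE_coupling Ds Dt αk1)
      (hLπ αk1 hαk1) ?_
    have hKL : 1 / 2 * ‖πk1 - πk‖ ^ 2 ≤ vecKL πk1 πk :=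
      half_mul_norm_sub_sq_le_vecKL (fun p => ⟨hπk1.1 p, le_one_of_mem_transportSet hπk1 p⟩)
        (fun p => ⟨hπkpos p, le_one_of_mem_transportSet hπk p⟩)
    have hKL' : 1 / (2 * η) * ‖πk1 - πk‖ ^ 2 ≤ 1 / η * vecKL πk1 πk :=
      calc 1 / (2 * η) * ‖πk1 - πk‖ ^ 2 = 1 / η * (1 / 2 * ‖πk1 - πk‖ ^ 2) := by ring
        _ ≤ 1 / η * vecKL πk1 πk := by gcongr
    have hcmp := hπmin πk hπk
    rw [vecKL_self, mul_zero, add_zero] at hcmp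
    rw [inner_sub_right]
    linarith
  have hminα := mul_le_mul_of_nonneg_right (min_le_left (1 / (2 * τ) - Lα / 2)
    (1 / (2 * η) - Lπ / 2)) (sq_nonneg ‖αk1 - αk‖)
  have hminπ := mul_le_mul_of_nonneg_right (min_le_right (1 / (2 * τ) - Lα / 2)
    (1 / (2 * η) - Lπ / 2)) (sq_nonneg ‖πk1 - πk‖)
  linarith

/-- Combined sufficient decrease of one SLOTAlign iteration: with
block gradient Lipschitz moduli `Lα` (in `α`, for every `π ∈ C`) and `Lπ` (in `π`,
for every `α ∈ Θ`), step sizes `0 < τ < 1/Lα`, `0 < η < 1/Lπ`, and updates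
`α^{k+1} = argmin_{α∈Θ} {⟨∇_α F(π^k, α^k), α⟩ + (1/(2τ))‖α − α^k‖²}`,
`π^{k+1} = argmin_{π∈C} {⟨∇_π F(π^k, α^{k+1}), π⟩ + (1/η)KL(π‖π^k)}`,
one has `F(π^{k+1}, α^{k+1}) − F(π^k, α^k) ≤ −κ₁(‖π^{k+1} − π^k‖_F² + ‖α^{k+1} − α^k‖²)`
with `κ₁ = min(1/(2τ) − Lα/2, 1/(2η) − Lπ/2) > 0`. -/
theorem slotalign_sufficient_decrease (n m K : ℕ)
    (Ds : Fin K → Matrix (Fin n) (Fin n) ℝ)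
    (Dt : Fin K → Matrix (Fin m) (Fin m) ℝ)
    (Lα Lπ τ η : ℝ)
    (hLα : ∀ π ∈ transportSet n m, ∀ a b : EuclideanSpace ℝ (Fin K ⊕ Fin K),
      ‖gradient (fun x => slotFE Ds Dt π x) a - gradient (fun x => slotFE Ds Dt π x) b‖
        ≤ Lα * ‖a - b‖)
    (hLπ : ∀ α ∈ weightSet K, ∀ p q : EuclideanSpace ℝ (Fin n × Fin m),
      ‖gradient (fun x => slotFE Ds Dt x α) p - gradient (fun x => slotFE Ds Dt x α) q‖
        ≤ Lπ * ‖p - q‖)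
    (hτ : 0 < τ) (hτ' : τ < 1 / Lα) (hη : 0 < η) (hη' : η < 1 / Lπ)
    (πk πk1 : EuclideanSpace ℝ (Fin n × Fin m))
    (αk αk1 : EuclideanSpace ℝ (Fin K ⊕ Fin K))
    (hπk : πk ∈ transportSet n m) (hπkpos : ∀ p, 0 < πk p)
    (hπk1 : πk1 ∈ transportSet n m)
    (hαk : αk ∈ weightSet K) (hαk1 : αk1 ∈ weightSet K)
    (hαmin : ∀ a ∈ weightSet K,
      ⟪gradient (fun x => slotFE Ds Dt πk x) αk, αk1⟫ + 1 / (2 * τ) * ‖αk1 - αk‖ ^ 2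
        ≤ ⟪gradient (fun x => slotFE Ds Dt πk x) αk, a⟫ + 1 / (2 * τ) * ‖a - αk‖ ^ 2)
    (hπmin : ∀ p ∈ transportSet n m,
      ⟪gradient (fun x => slotFE Ds Dt x αk1) πk, πk1⟫ + (1 / η) * vecKL πk1 πk
        ≤ ⟪gradient (fun x => slotFE Ds Dt x αk1) πk, p⟫ + (1 / η) * vecKL p πk) :
    slotFE Ds Dt πk1 αk1 - slotFE Ds Dt πk αk
      ≤ -(min (1 / (2 * τ) - Lα / 2) (1 / (2 * η) - Lπ / 2))
          * (‖πk1 - πk‖ ^ 2 + ‖αk1 - αk‖ ^ 2) :=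
  slotalign_sufficient_decrease_general n m K Ds Dt Lα Lπ τ η hLα hLπ hη πk πk1 αk αk1 hπk hπkpos
    hπk1 hαk hαk1 hαmin hπmin
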